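/- arXiv:2304.07846 — 2 statements merged into one kernel-verified Lean document; each statement's English description precedes it below -/
import Mathlib

section
/- Let s > 0 and z₀ ∈ ℝ \ {0}. Then there exists a constant C > 0, depending only on z₀ and s, such that for every ξ ∈ ℝ^n \ {0}: | |ξ|^s − z₀ | + s|ξ|^{s−1} + 1 ≥ C (5/2 + |ξ|²)^{s/2}. -/
/-- the elementary symbol inequality
`| |ξ|^s − z₀ | + s|ξ|^{s−1} + 1 ≥ C (5/2 + |ξ|²)^{s/2}` for `ξ ≠ 0`, with `C = C(z₀, s) > 0`
independent of the dimension. -/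
theorem statement7 (s z₀ : ℝ) (hs : 0 < s) (hz₀ : z₀ ≠ 0) :
    ∃ C : ℝ, 0 < C ∧ ∀ (n : ℕ) (ξ : EuclideanSpace ℝ (Fin n)), ξ ≠ 0 →
      C * (5 / 2 + ‖ξ‖ ^ 2) ^ (s / 2) ≤ |‖ξ‖ ^ s - z₀| + s * ‖ξ‖ ^ (s - 1) + 1 := by
  set D : ℝ := (5/2 : ℝ) ^ (s/2) * 2 ^ s * (1 + |z₀|) with hD
  have hDpos : 0 < D := by positivity
  refine ⟨D⁻¹, inv_pos.mpr hDpos, ?_⟩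
  intro n ξ hξ
  set r : ℝ := ‖ξ‖ with hr
  have hr0 : 0 < r := norm_pos_iff.mpr hξ
  have h1 : (5/2 + r ^ 2) ^ (s/2) ≤ ((5/2 : ℝ) * (1 + r)^2) ^ (s/2) := by
    apply Real.rpow_le_rpow (by positivity) (by nlinarith) (by positivity)
  have h2 : ((5/2 : ℝ) * (1 + r)^2) ^ (s/2)
      = (5/2 : ℝ) ^ (s/2) * (1 + r) ^ s := by
    rw [Real.mul_rpow (by norm_num) (by positivity), ← Real.rpow_natCast (1 + r) 2,
      ← Real.rpow_mul (by positivity),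
      show ((2:ℕ):ℝ) * (s/2) = s by push_cast; ring]
  have h3 : (1 + r) ^ s ≤ 2 ^ s * (1 + r ^ s) := by
    have hm : (1 + r) ^ s ≤ (2 * max 1 r) ^ s := by
      apply Real.rpow_le_rpow (by positivity) ?_ hs.le
      rcases le_total r 1 with h | h
      · rw [max_eq_left h]; linarith
      · rw [max_eq_right h]; linarith
    have he : (2 * max 1 r) ^ s = 2 ^ s * (max 1 r) ^ s :=
      Real.mul_rpow (by norm_num) (by positivity)
    rw [he] at hm
    refine hm.trans ?_
    gcongr
    rcases le_total r 1 with h | h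
    · rw [max_eq_left h, Real.one_rpow]
      have := Real.rpow_nonneg hr0.le s
      linarith
    · rw [max_eq_right h]
      have := Real.rpow_nonneg hr0.le s
      linarith [Real.rpow_nonneg hr0.le s]
  have h4 : 1 + r ^ s ≤ (1 + |z₀|) * (|r ^ s - z₀| + 1) := by
    have hb := le_abs_self (r ^ s - z₀)
    have hc := neg_abs_le z₀
    have hc2 := le_abs_self z₀
    have hb0 := abs_nonneg (r ^ s - z₀)
    have hc0 := abs_nonneg z₀
    nlinarith
  have hchain : (5/2 + r ^ 2) ^ (s/2) ≤ D * (|r ^ s - z₀| + 1) := by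
    calc (5/2 + r ^ 2) ^ (s/2) ≤ (5/2 : ℝ) ^ (s/2) * (1 + r) ^ s := by rw [← h2]; exact h1
      _ ≤ (5/2 : ℝ) ^ (s/2) * (2 ^ s * (1 + r ^ s)) := by gcongr
      _ ≤ (5/2 : ℝ) ^ (s/2) * (2 ^ s * ((1 + |z₀|) * (|r ^ s - z₀| + 1))) := by gcongr
      _ = D * (|r ^ s - z₀| + 1) := by rw [hD]; ring
  have hmain : D⁻¹ * (5/2 + r ^ 2) ^ (s/2) ≤ |r ^ s - z₀| + 1 := by
    rw [inv_mul_le_iff₀ hDpos]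
    exact hchain
  have hpow : 0 ≤ s * r ^ (s - 1) := by positivity
  linarith
end

section
/- Let n ≥ 1, s > 0 and z₀ ∈ ℝ \ {0}. For η ∈ ℝ^n define Q_η(ξ) = (|ξ+η|^s − z₀)/(1+|η|²)^{s/2}. Then there exists c > 0 such that for every η ∈ ℝ^n and every ξ ∈ ℝ^n with |ξ| ≤ 1: if ξ + η ≠ 0 then |Q_η(ξ)| + s|ξ+η|^{s−1}/(1+|η|²)^{s/2} ≥ c, and if ξ + η = 0 then |Q_η(ξ)| ≥ c. (Here s|ξ+η|^{s−1}/(1+|η|²)^{s/2} equals |∇Q_η(ξ)| wherever Q_η is differentiable; in particular 0 is not a critical value of Q_η on the closed unit ball, uniformly in η.) -/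
/-! With `r = |ξ + η|`, the constraint `|ξ| ≤ 1` gives `|η| ≤ r + 1`, so the weight
`(1 + |η|²)^{s/2}` is at most `(r + 2)^s`; everything reduces to the one-variable bound
`c (r + 2)^s ≤ |r^s - z₀| + s r^{s-1}` for `r > 0`. On a bounded range `r ≤ b` the right side
stays away from `0`: either `r^s ≤ |z₀|/2`, so the first term is at least `|z₀|/2`, or `r` lies
in a compact interval `[a, b] ⊂ (0, ∞)` where `r^{s-1}` is bounded below. Once `r^s ≥ 2|z₀|`,
the first term alone is at least `r^s/2`, which is comparable to `(r + 2)^s`. -/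

open Real

lemma min_rpow_le_rpow_of_le_of_le {a b r : ℝ} (ha : 0 < a) (har : a ≤ r) (hrb : r ≤ b)
    (x : ℝ) : min (a ^ x) (b ^ x) ≤ r ^ x := by
  rcases le_total 0 x with hx | hx
  · exact (min_le_left _ _).trans (rpow_le_rpow ha.le har hx)
  · exact (min_le_right _ _).trans (rpow_le_rpow_of_nonpos (ha.trans_le har) hrb hx)

section OneVariable

variable {s z₀ : ℝ}

lemma exists_pos_le_abs_rpow_sub_add_of_le (hs : 0 < s) (hz₀ : z₀ ≠ 0) {b : ℝ} (hb : 0 < b) :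
    ∃ κ > 0, ∀ r, 0 < r → r ≤ b → κ ≤ |r ^ s - z₀| + s * r ^ (s - 1) := by
  set a := (|z₀| / 2) ^ s⁻¹
  have ha : 0 < a := by positivity
  refine ⟨min (|z₀| / 2) (s * min (a ^ (s - 1)) (b ^ (s - 1))), by positivity, ?_⟩
  intro r hr hrb
  have hgrad : 0 ≤ s * r ^ (s - 1) := by positivity
  rcases le_total r a with hra | har
  · have hrs : r ^ s ≤ |z₀| / 2 := by
      simpa only [a, rpow_inv_rpow (by positivity : 0 ≤ |z₀| / 2) hs.ne']
        using rpow_le_rpow hr.le hra hs.le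
    have : |z₀| - |r ^ s| ≤ |r ^ s - z₀| := by
      rw [abs_sub_comm]; exact abs_sub_abs_le_abs_sub _ _
    rw [abs_of_nonneg (rpow_nonneg hr.le s)] at this
    linarith [min_le_left (|z₀| / 2) (s * min (a ^ (s - 1)) (b ^ (s - 1)))]
  · have := mul_le_mul_of_nonneg_left (min_rpow_le_rpow_of_le_of_le ha har hrb (s - 1)) hs.le
    linarith [min_le_right (|z₀| / 2) (s * min (a ^ (s - 1)) (b ^ (s - 1))),
      abs_nonneg (r ^ s - z₀)]

theorem exists_pos_mul_add_two_rpow_le (hs : 0 < s) (hz₀ : z₀ ≠ 0) :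
    ∃ c > 0, ∀ r, 0 < r → c * (r + 2) ^ s ≤ |r ^ s - z₀| + s * r ^ (s - 1) := by
  set b := (2 * |z₀|) ^ s⁻¹
  have hb : 0 < b := by positivity
  obtain ⟨κ, hκ, hκr⟩ := exists_pos_le_abs_rpow_sub_add_of_le hs hz₀ hb
  set c := min (κ / (b + 2) ^ s) (1 / (2 * (1 + 2 / b) ^ s))
  refine ⟨c, by positivity, fun r hr => ?_⟩
  have hgrad : 0 ≤ s * r ^ (s - 1) := by positivity
  rcases le_total r b with hrb | hbr
  · calc c * (r + 2) ^ s ≤ κ / (b + 2) ^ s * (b + 2) ^ s :=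
          mul_le_mul (min_le_left _ _) (rpow_le_rpow (by positivity) (by linarith) hs.le)
            (by positivity) (by positivity)
      _ = κ := div_mul_cancel₀ _ (by positivity)
      _ ≤ _ := hκr r hr hrb
  · have hrs : 2 * |z₀| ≤ r ^ s := by
      simpa only [b, rpow_inv_rpow (by positivity : 0 ≤ 2 * |z₀|) hs.ne']
        using rpow_le_rpow hb.le hbr hs.le
    have hlin : r + 2 ≤ (1 + 2 / b) * r := by
      rw [add_mul, one_mul, div_mul_eq_mul_div, add_le_add_iff_left, le_div_iff₀ hb]
      nlinarith
    have hweight : (r + 2) ^ s ≤ (1 + 2 / b) ^ s * r ^ s := by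
      rw [← mul_rpow (by positivity) hr.le]
      exact rpow_le_rpow (by positivity) hlin hs.le
    calc c * (r + 2) ^ s ≤ 1 / (2 * (1 + 2 / b) ^ s) * ((1 + 2 / b) ^ s * r ^ s) :=
          mul_le_mul (min_le_right _ _) hweight (by positivity) (by positivity)
      _ = r ^ s / 2 := by field_simp
      _ ≤ |r ^ s - z₀| := by linarith [le_abs_self (r ^ s - z₀), le_abs_self z₀]
      _ ≤ _ := le_add_of_nonneg_right hgrad

end OneVariable

lemma one_add_norm_sq_rpow_le {E : Type*} [SeminormedAddCommGroup E] {s : ℝ} (hs : 0 ≤ s)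
    {ξ η : E} (hξ : ‖ξ‖ ≤ 1) : (1 + ‖η‖ ^ 2) ^ (s / 2) ≤ (‖ξ + η‖ + 2) ^ s := by
  have hη : ‖η‖ ≤ ‖ξ + η‖ + 1 := by
    calc ‖η‖ = ‖(ξ + η) - ξ‖ := by rw [add_sub_cancel_left]
      _ ≤ ‖ξ + η‖ + ‖ξ‖ := norm_sub_le _ _
      _ ≤ ‖ξ + η‖ + 1 := by linarith
  have hsq : 1 + ‖η‖ ^ 2 ≤ (‖ξ + η‖ + 2) ^ 2 := by
    nlinarith [norm_nonneg η, norm_nonneg (ξ + η)]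
  calc (1 + ‖η‖ ^ 2) ^ (s / 2) ≤ ((‖ξ + η‖ + 2) ^ 2) ^ (s / 2) :=
        rpow_le_rpow (by positivity) hsq (by positivity)
    _ = (‖ξ + η‖ + 2) ^ s := by
        rw [← rpow_natCast_mul (by positivity)]; push_cast; ring_nf

theorem statement8_general (n : ℕ) (s z₀ : ℝ) (hs : 0 < s) (hz₀ : z₀ ≠ 0) :
    ∃ c : ℝ, 0 < c ∧ ∀ (η ξ : EuclideanSpace ℝ (Fin n)), ‖ξ‖ ≤ 1 →
      (ξ + η ≠ 0 →
        c ≤ |(‖ξ + η‖ ^ s - z₀) / (1 + ‖η‖ ^ 2) ^ (s / 2)| +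
              s * ‖ξ + η‖ ^ (s - 1) / (1 + ‖η‖ ^ 2) ^ (s / 2)) ∧
      (ξ + η = 0 →
        c ≤ |(‖ξ + η‖ ^ s - z₀) / (1 + ‖η‖ ^ 2) ^ (s / 2)|) := by
  obtain ⟨c, hc, hcr⟩ := exists_pos_mul_add_two_rpow_le hs hz₀
  refine ⟨min c (|z₀| / 2 ^ s), by positivity, fun η ξ hξ => ?_⟩
  have hw : 0 < (1 + ‖η‖ ^ 2) ^ (s / 2) := by positivity
  have hwr : (1 + ‖η‖ ^ 2) ^ (s / 2) ≤ (‖ξ + η‖ + 2) ^ s := one_add_norm_sq_rpow_le hs.le hξ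
  rw [abs_div, abs_of_pos hw]
  constructor
  · intro hne
    rw [← add_div, le_div_iff₀ hw]
    calc _ ≤ c * (‖ξ + η‖ + 2) ^ s := mul_le_mul (min_le_left _ _) hwr hw.le hc.le
      _ ≤ _ := hcr _ (norm_pos_iff.mpr hne)
  · intro hzero
    rw [hzero, norm_zero] at hwr ⊢
    rw [zero_rpow hs.ne', zero_sub, abs_neg, le_div_iff₀ hw]
    calc _ ≤ |z₀| / 2 ^ s * (0 + 2) ^ s :=
          mul_le_mul (min_le_right _ _) hwr hw.le (by positivity)
      _ = |z₀| := by rw [zero_add, div_mul_cancel₀ _ (by positivity)]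

/-- `0` is not a critical value of the rescaled symbols
`Q_η(ξ) = (|ξ+η|^s − z₀)/⟨η⟩^s` on the closed unit ball, uniformly in `η`:
`|Q_η(ξ)| + |∇Q_η(ξ)| ≥ c > 0` (where `|∇Q_η(ξ)| = s|ξ+η|^{s−1}/⟨η⟩^s`). -/
theorem statement8 (n : ℕ) (hn : 1 ≤ n) (s z₀ : ℝ) (hs : 0 < s) (hz₀ : z₀ ≠ 0) :
    ∃ c : ℝ, 0 < c ∧ ∀ (η ξ : EuclideanSpace ℝ (Fin n)), ‖ξ‖ ≤ 1 →
      (ξ + η ≠ 0 →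
        c ≤ |(‖ξ + η‖ ^ s - z₀) / (1 + ‖η‖ ^ 2) ^ (s / 2)| +
              s * ‖ξ + η‖ ^ (s - 1) / (1 + ‖η‖ ^ 2) ^ (s / 2)) ∧
      (ξ + η = 0 →
        c ≤ |(‖ξ + η‖ ^ s - z₀) / (1 + ‖η‖ ^ 2) ^ (s / 2)|) :=
  statement8_general n s z₀ hs hz₀
end
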